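/- arXiv:1505.01701 — 2 statements merged into one kernel-verified Lean document; each statement's English description precedes it below -/
import Mathlib

section
/- Let g be an element of a group P acting on a module M, let τ ∈ Z^2(P, M) and let U ≤ P. Suppose f ∈ C^1(U, M) and f' ∈ C^1(gUg^{-1}, M) satisfy Δ(f) = τ|_U and Δ(f') = τ|_{gUg^{-1}}. Define χ(v) = g·f(g^{-1}vg) − τ(g, g^{-1}vg) + τ(v, g) − f'(v) for v ∈ gUg^{-1}. Then χ ∈ Z^1(gUg^{-1}, M), i.e., Δ(χ) = 0. -/
/-- Let `g` be an element of a group `P` acting on a module `M`, let `τ ∈ Z^2(P,M)`, and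
let `U ≤ P`.  Suppose `f ∈ C^1(U,M)` and `f' ∈ C^1(gUg⁻¹, M)` satisfy `Δf = τ|_U` and
`Δf' = τ|_{gUg⁻¹}`.  Define `χ v = g • f (g⁻¹ v g) - τ g (g⁻¹ v g) + τ v g - f' v`
for `v ∈ gUg⁻¹`.  Then `χ ∈ Z^1(gUg⁻¹, M)`, i.e. `Δχ = 0`. -/
theorem chi_isOneCocycle
    {P : Type} [Group P] {M : Type} [AddCommGroup M] [DistribMulAction P M]
    (g : P) (τ : P → P → M)
    (hτ : ∀ g1 g2 g3 : P,
      g1 • τ g2 g3 - τ (g1 * g2) g3 + τ g1 (g2 * g3) - τ g1 g2 = 0)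
    (U : Subgroup P) (f f' : P → M)
    (hf : ∀ u1 ∈ U, ∀ u2 ∈ U, τ u1 u2 = u1 • f u2 - f (u1 * u2) + f u1)
    (hf' : ∀ v1 : P, g⁻¹ * v1 * g ∈ U → ∀ v2 : P, g⁻¹ * v2 * g ∈ U →
      τ v1 v2 = v1 • f' v2 - f' (v1 * v2) + f' v1)
    (χ : P → M)
    (hχ : ∀ v : P, χ v = g • f (g⁻¹ * v * g) - τ g (g⁻¹ * v * g) + τ v g - f' v) :
    ∀ v1 : P, g⁻¹ * v1 * g ∈ U → ∀ v2 : P, g⁻¹ * v2 * g ∈ U →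
      v1 • χ v2 - χ (v1 * v2) + χ v1 = 0 := by
  intro v1 h1 v2 h2
  have e1 := hτ g (g⁻¹ * v1 * g) (g⁻¹ * v2 * g)
  have e2 := hτ v1 g (g⁻¹ * v2 * g)
  have e3 := hτ v1 v2 g
  have e4 := hf _ h1 _ h2
  have e5 := hf' v1 h1 v2 h2
  have e4' : g • τ (g⁻¹ * v1 * g) (g⁻¹ * v2 * g)
      = g • ((g⁻¹ * v1 * g) • f (g⁻¹ * v2 * g)
        - f ((g⁻¹ * v1 * g) * (g⁻¹ * v2 * g)) + f (g⁻¹ * v1 * g)) := by rw [e4]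
  rw [hχ, hχ, hχ]
  simp only [smul_sub, smul_add, smul_smul, mul_assoc, mul_inv_cancel_left,
    inv_mul_cancel_left] at *
  linear_combination (norm := abel) e1 - e4' - e2 + e3 + e5
end

section
/- Let p be an odd prime, O = ℤ_p[θ] with θ a primitive p-th root of unity, and G = O ⋊ C_p where the generator τ of C_p acts as multiplication by θ. Then γ_i(G) = (θ−1)^{i−1}O for all i ≥ 2, and γ_i(G)/γ_{i+1}(G) ≅ C_p. -/
set_option maxHeartbeats 1000000
set_option synthInstance.maxHeartbeats 400000

/-- The multiplicative automorphism of `Multiplicative A` induced by an additive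
automorphism of `A`. -/
def toMulAut {A : Type} [AddGroup A] (e : AddAut A) : MulAut (Multiplicative A) where
  toFun x := Multiplicative.ofAdd (e (Multiplicative.toAdd x))
  invFun x := Multiplicative.ofAdd (e.symm (Multiplicative.toAdd x))
  left_inv x := by simp
  right_inv x := by simp
  map_mul' x y := by
    show Multiplicative.ofAdd (e (Multiplicative.toAdd x + Multiplicative.toAdd y)) = _
    rw [map_add]
    rfl

/-- Multiplication by the unit `u` as an automorphism of the additive group of `R`,
viewed multiplicatively. -/
def thetaAut {R : Type} [CommRing R] (u : Rˣ) : MulAut (Multiplicative R) :=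
  toMulAut (DistribMulAction.toAddAut Rˣ R u)

/-- The group `G = R ⋊ ⟨θ⟩`, where the cyclic group generated by the automorphism
"multiplication by the unit `u` (= θ)" acts on the additive group of `R`. -/
abbrev GpGrp (R : Type) [CommRing R] (u : Rˣ) : Type :=
  Multiplicative R ⋊[(Subgroup.zpowers (thetaAut u)).subtype] (Subgroup.zpowers (thetaAut u))

/-- The element `τ` (the generator of the acting cyclic group) in `G = R ⋊ ⟨θ⟩`. -/
def tauEl (R : Type) [CommRing R] (u : Rˣ) : GpGrp R u :=
  SemidirectProduct.inr ⟨thetaAut u, Subgroup.mem_zpowers _⟩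

/-- The translation element corresponding to `v ∈ R` in `G = R ⋊ ⟨θ⟩`. -/
def trEl (R : Type) [CommRing R] (u : Rˣ) (v : R) : GpGrp R u :=
  SemidirectProduct.inl (Multiplicative.ofAdd v)

/-- The subgroup of `G = R ⋊ ⟨θ⟩` given by the translations lying in the ideal `I`. -/
def transSub (R : Type) [CommRing R] (u : Rˣ) (I : Ideal R) : Subgroup (GpGrp R u) :=
  Subgroup.map SemidirectProduct.inl (AddSubgroup.toSubgroup I.toAddSubgroup)

/-!
Every element of `G` is `v τ^a` with `v ∈ O`, and the commutator of `v τ^a` and `w τ^b` is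
the translation by `(1 - θ^b) v + (θ^a - 1) w`. As `θ^a - 1 ∈ (θ - 1)`, commutators of `G`
with translations by an ideal `I` are translations by `(θ - 1) I`, and `[-z, τ] = (θ - 1) z`
shows that all of them occur; hence `γ_{n+1}(G) = (θ - 1)^n O`. Multiplication by
`(θ - 1)^n` identifies `γ_{n+1}(G)/γ_{n+2}(G)` with `O/(θ - 1)`, which is `ℤ_p/(p) = 𝔽_p`:
it is the image of `ℤ_p` because `θ ≡ 1`, it kills `p ≡ 1 + θ + ⋯ + θ^(p-1) = 0`, and it is
nonzero because `(θ - 1)^p ≡ θ^p - 1 = 0` modulo `p`, which is not a unit in the integral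
extension `O` of `ℤ_p`.
-/
open SemidirectProduct
open scoped commutatorElement

section Translations

variable {R : Type} [CommRing R] (u : Rˣ)

lemma thetaAut_mul (a b : Rˣ) : thetaAut (a * b) = thetaAut a * thetaAut b := by
  ext x
  show Multiplicative.ofAdd ((a * b) • Multiplicative.toAdd x) = _
  rw [mul_smul]
  rfl

lemma thetaAut_zpow (a : ℤ) : thetaAut u ^ a = thetaAut (u ^ a) :=
  (map_zpow (MonoidHom.mk' thetaAut thetaAut_mul) u a).symm

lemma thetaAut_apply (v : Rˣ) (x : Multiplicative R) :
    thetaAut v x = Multiplicative.ofAdd ((v : R) * Multiplicative.toAdd x) := rfl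

lemma thetaAut_one : thetaAut (1 : Rˣ) = 1 := by
  ext x
  simp [thetaAut_apply]

lemma mem_transSub {I : Ideal R} {g : GpGrp R u} :
    g ∈ transSub R u I ↔ ∃ v ∈ I, g = trEl R u v := by
  constructor
  · rintro ⟨x, hx, rfl⟩
    exact ⟨Multiplicative.toAdd x, hx, rfl⟩
  · rintro ⟨v, hv, rfl⟩
    exact ⟨Multiplicative.ofAdd v, hv, rfl⟩

lemma trEl_mem_transSub {I : Ideal R} {v : R} (hv : v ∈ I) : trEl R u v ∈ transSub R u I :=
  (mem_transSub u).2 ⟨v, hv, rfl⟩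

lemma Units.val_zpow_sub_one_mem_span (b : ℤ) :
    ((u ^ b : Rˣ) : R) - 1 ∈ Ideal.span {(u : R) - 1} := by
  set J := Ideal.span {(u : R) - 1}
  have hu : Units.map (Ideal.Quotient.mk J).toMonoidHom u = 1 :=
    Units.ext (Ideal.Quotient.eq.2 (Ideal.mem_span_singleton_self _))
  rw [← Ideal.Quotient.eq]
  change ((Units.map (Ideal.Quotient.mk J).toMonoidHom (u ^ b) : (R ⧸ J)ˣ) : R ⧸ J)
    = ((1 : (R ⧸ J)ˣ) : R ⧸ J)
  rw [map_zpow, hu, one_zpow]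

lemma commutator_eq_trEl (g₁ g₂ : GpGrp R u) {a b : ℤ}
    (ha : (g₁.right : MulAut (Multiplicative R)) = thetaAut (u ^ a))
    (hb : (g₂.right : MulAut (Multiplicative R)) = thetaAut (u ^ b)) :
    ⁅g₁, g₂⁆ = trEl R u ((1 - ((u ^ b : Rˣ) : R)) * Multiplicative.toAdd g₁.left
      + (((u ^ a : Rˣ) : R) - 1) * Multiplicative.toAdd g₂.left) := by
  have hcomm : Commute g₁.right g₂.right := by
    rw [Commute, SemiconjBy, Subtype.ext_iff]
    simp only [Subgroup.coe_mul, ha, hb, ← thetaAut_mul, mul_comm]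
  ext
  · simp only [commutatorElement_def, mul_left, inv_left, inv_right, mul_right, trEl, left_inl,
      Subgroup.coe_subtype, Subgroup.coe_mul, Subgroup.coe_inv, hcomm.eq, mul_inv_cancel_right,
      MulAut.mul_apply, MulAut.apply_inv_self, ha, hb, thetaAut_apply, toAdd_mul, toAdd_inv,
      toAdd_ofAdd]
    ring
  · simp only [commutatorElement_def, trEl, right_inl, mul_right, inv_right, hcomm.eq]
    group

lemma exists_right_eq_thetaAut_zpow (g : GpGrp R u) :
    ∃ a : ℤ, (g.right : MulAut (Multiplicative R)) = thetaAut (u ^ a) := by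
  obtain ⟨a, ha⟩ := g.right.2
  exact ⟨a, by rw [← ha, ← thetaAut_zpow]⟩

lemma commutator_trEl_tauEl (v : R) :
    ⁅trEl R u v, tauEl R u⁆ = trEl R u ((1 - (u : R)) * v) := by
  rw [commutator_eq_trEl u _ _ (a := 0) (b := 1) (by simp [trEl, thetaAut_one]) (by simp [tauEl])]
  simp [trEl, tauEl]

lemma commutator_top_top :
    ⁅(⊤ : Subgroup (GpGrp R u)), ⊤⁆ = transSub R u (Ideal.span {(u : R) - 1}) := by
  apply le_antisymm
  · rw [Subgroup.commutator_le]
    intro g₁ _ g₂ _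
    obtain ⟨a, ha⟩ := exists_right_eq_thetaAut_zpow u g₁
    obtain ⟨b, hb⟩ := exists_right_eq_thetaAut_zpow u g₂
    rw [commutator_eq_trEl u g₁ g₂ ha hb]
    refine trEl_mem_transSub u (add_mem (Ideal.mul_mem_right _ _ ?_) (Ideal.mul_mem_right _ _ ?_))
    · rw [← neg_sub (u ^ b : Rˣ).val]
      exact neg_mem (Units.val_zpow_sub_one_mem_span u b)
    · exact Units.val_zpow_sub_one_mem_span u a
  · intro g hg
    obtain ⟨w, hw, rfl⟩ := (mem_transSub u).1 hg
    obtain ⟨z, rfl⟩ := Ideal.mem_span_singleton'.1 hw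
    rw [show z * ((u : R) - 1) = (1 - (u : R)) * -z by ring, ← commutator_trEl_tauEl]
    exact Subgroup.commutator_mem_commutator (Subgroup.mem_top _) (Subgroup.mem_top _)

lemma commutator_transSub_top (I : Ideal R) :
    ⁅transSub R u I, ⊤⁆ = transSub R u (Ideal.span {(u : R) - 1} * I) := by
  apply le_antisymm
  · rw [Subgroup.commutator_le]
    intro g₁ hg₁ g₂ _
    obtain ⟨v, hv, rfl⟩ := (mem_transSub u).1 hg₁
    obtain ⟨b, hb⟩ := exists_right_eq_thetaAut_zpow u g₂
    rw [commutator_eq_trEl u _ g₂ (a := 0) (by simp [trEl, thetaAut_one]) hb]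
    refine trEl_mem_transSub u ?_
    have hb' := neg_mem (Units.val_zpow_sub_one_mem_span u b)
    rw [neg_sub] at hb'
    simpa [trEl] using Ideal.mul_mem_mul hb' hv
  · intro g hg
    obtain ⟨w, hw, rfl⟩ := (mem_transSub u).1 hg
    obtain ⟨z, hz, rfl⟩ := Ideal.mem_span_singleton_mul.1 hw
    rw [show ((u : R) - 1) * z = (1 - (u : R)) * -z by ring, ← commutator_trEl_tauEl]
    exact Subgroup.commutator_mem_commutator (trEl_mem_transSub u (neg_mem hz)) (Subgroup.mem_top _)

lemma lowerCentralSeries_succ_eq_transSub (n : ℕ) :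
    (⊤ : Subgroup (GpGrp R u)).lowerCentralSeries (n + 1)
      = transSub R u (Ideal.span {(u : R) - 1} ^ (n + 1)) := by
  induction n with
  | zero => simpa using commutator_top_top u
  | succ n ih => rw [Subgroup.lowerCentralSeries_succ, ih, commutator_transSub_top, ← pow_succ']

lemma relIndex_transSub (I J : Ideal R) :
    (transSub R u I).relIndex (transSub R u J) = I.toAddSubgroup.relIndex J.toAddSubgroup :=
  Subgroup.relIndex_map_map_of_injective _ _ inl_injective

end Translations

lemma Ideal.relIndex_span_singleton_pow_succ {R : Type*} [CommRing R] {t : R}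
    (ht : IsLeftRegular t) (k : ℕ) :
    (Ideal.span {t} ^ (k + 1)).toAddSubgroup.relIndex (Ideal.span {t} ^ k).toAddSubgroup
      = Nat.card (R ⧸ Ideal.span {t}) := by
  have map_mulLeft (I : Ideal R) :
      I.toAddSubgroup.map (AddMonoidHom.mulLeft (t ^ k))
        = (Ideal.span {t ^ k} * I).toAddSubgroup := by
    ext x
    simp [Ideal.mem_span_singleton_mul, eq_comm]
  rw [pow_succ, Ideal.span_singleton_pow, ← map_mulLeft, ← Ideal.mul_top (Ideal.span {t ^ k}),
    ← map_mulLeft, AddSubgroup.relIndex_map_map_of_injective _ _ (ht.pow k),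
    Submodule.top_toAddSubgroup, AddSubgroup.relIndex_top_right]
  rfl

lemma Algebra.surjective_algebraMap_quotient_of_adjoin_eq_top {A B : Type*} [CommRing A]
    [CommRing B] [Algebra A B] {x : B} (hx : Algebra.adjoin A {x} = ⊤) {J : Ideal B} {a : A}
    (hxa : x - algebraMap A B a ∈ J) : Function.Surjective (algebraMap A (B ⧸ J)) := by
  have hx' : Ideal.Quotient.mkₐ A J x = algebraMap A (B ⧸ J) a := Ideal.Quotient.eq.2 hxa
  have htop : Algebra.adjoin A {algebraMap A (B ⧸ J) a} = ⊤ := by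
    rw [← hx', ← Set.image_singleton, ← AlgHom.map_adjoin, hx, Algebra.map_top,
      AlgHom.range_eq_top]
    exact Ideal.Quotient.mkₐ_surjective A J
  intro y
  have hy : y ∈ (⊥ : Subalgebra A (B ⧸ J)) :=
    Algebra.adjoin_le (Set.singleton_subset_iff.2 (Subalgebra.algebraMap_mem ⊥ a))
      (htop ▸ Algebra.mem_top)
  exact Algebra.mem_bot.1 hy

lemma IsPrimitiveRoot.natCast_mem_span_sub_one {B : Type*} [CommRing B] [IsDomain B] {ζ : B}
    {n : ℕ} (hζ : IsPrimitiveRoot ζ n) (hn : 1 < n) : (n : B) ∈ Ideal.span {ζ - 1} := by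
  have hζ1 : Ideal.Quotient.mk (Ideal.span {ζ - 1}) ζ = 1 :=
    Ideal.Quotient.eq.2 (Ideal.mem_span_singleton_self _)
  have h := congrArg (Ideal.Quotient.mk (Ideal.span {ζ - 1})) (hζ.geom_sum_eq_zero hn)
  simpa [map_sum, hζ1, ← Ideal.Quotient.eq_zero_iff_mem] using h

lemma not_isUnit_sub_one_of_pow_eq_one {B : Type*} [CommRing B] {p : ℕ} [Fact p.Prime]
    (hp : ¬IsUnit (p : B)) {ζ : B} (hζ : ζ ^ p = 1) : ¬IsUnit (ζ - 1) := by
  have : CharP (B ⧸ Ideal.span {(p : B)}) p := CharP.quotient B p hp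
  have hmem : (ζ - 1) ^ p ∈ Ideal.span {(p : B)} := by
    rw [← Ideal.Quotient.eq_zero_iff_mem, map_pow, map_sub, sub_pow_char, ← map_pow, hζ,
      map_one, one_pow, sub_self]
  obtain ⟨c, hc⟩ := Ideal.mem_span_singleton.1 hmem
  exact fun h => hp (isUnit_of_mul_isUnit_left (hc ▸ h.pow p))

section Padic

variable {p : ℕ} [Fact p.Prime] {B : Type*} [CommRing B] [Algebra ℤ_[p] B]

lemma PadicInt.not_isUnit_natCast_of_isIntegral [Algebra.IsIntegral ℤ_[p] B]
    [FaithfulSMul ℤ_[p] B] : ¬IsUnit (p : B) := by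
  rw [← map_natCast (algebraMap ℤ_[p] B)]
  refine fun h => (IsLocalRing.mem_maximalIdeal _).1 ?_ (isUnit_of_map_unit _ _ h)
  rw [PadicInt.maximalIdeal_eq_span_p]
  exact Ideal.mem_span_singleton_self _

lemma PadicInt.card_quotient_span_sub_one [IsDomain B] [Algebra.IsIntegral ℤ_[p] B]
    [FaithfulSMul ℤ_[p] B] {ζ : B} (hζ : IsPrimitiveRoot ζ p)
    (hgen : Algebra.adjoin ℤ_[p] {ζ} = ⊤) : Nat.card (B ⧸ Ideal.span {ζ - 1}) = p := by
  set J := Ideal.span {ζ - 1}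
  have hsurj : Function.Surjective (algebraMap ℤ_[p] (B ⧸ J)) :=
    Algebra.surjective_algebraMap_quotient_of_adjoin_eq_top hgen (a := 1)
      (by rw [map_one]; exact Ideal.mem_span_singleton_self _)
  have hJ : J ≠ ⊤ := by
    rw [Ne, Ideal.span_singleton_eq_top]
    exact not_isUnit_sub_one_of_pow_eq_one not_isUnit_natCast_of_isIntegral hζ.pow_eq_one
  have : Nontrivial (B ⧸ J) := Ideal.Quotient.nontrivial_iff.2 hJ
  have hker : RingHom.ker (algebraMap ℤ_[p] (B ⧸ J)) = RingHom.ker PadicInt.toZMod := by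
    rw [PadicInt.ker_toZMod]
    refine le_antisymm (IsLocalRing.le_maximalIdeal (RingHom.ker_ne_top _)) ?_
    rw [PadicInt.maximalIdeal_eq_span_p, Ideal.span_le, Set.singleton_subset_iff, SetLike.mem_coe,
      RingHom.mem_ker, map_natCast, ← map_natCast (Ideal.Quotient.mk J),
      Ideal.Quotient.eq_zero_iff_mem]
    exact hζ.natCast_mem_span_sub_one (Fact.out : p.Prime).one_lt
  calc Nat.card (B ⧸ J)
      = Nat.card (ℤ_[p] ⧸ RingHom.ker (algebraMap ℤ_[p] (B ⧸ J))) :=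
        Nat.card_congr (RingHom.quotientKerEquivOfSurjective hsurj).symm.toEquiv
    _ = Nat.card (ZMod p) := hker ▸ Nat.card_congr
        (RingHom.quotientKerEquivOfSurjective (ZMod.ringHom_surjective PadicInt.toZMod)).toEquiv
    _ = p := Nat.card_zmod p

end Padic

theorem lowerCentralSeries_maximal_class_group_general
    (p : ℕ) [Fact p.Prime] {K : Type} [Field K]
    [Algebra ℚ_[p] K] [Algebra ℤ_[p] K] [IsScalarTower ℤ_[p] ℚ_[p] K]
    (θ : K) (hθ : IsPrimitiveRoot θ p)
    (u : (Algebra.adjoin ℤ_[p] {θ})ˣ)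
    (hu : (u : ↥(Algebra.adjoin ℤ_[p] {θ})) = ⟨θ, Algebra.subset_adjoin rfl⟩)
    (i : ℕ) (hi : 2 ≤ i) :
    Subgroup.lowerCentralSeries (⊤ : Subgroup (GpGrp (↥(Algebra.adjoin ℤ_[p] {θ})) u)) (i - 1)
      = transSub (↥(Algebra.adjoin ℤ_[p] {θ})) u
          (Ideal.span {(⟨θ, Algebra.subset_adjoin rfl⟩ : ↥(Algebra.adjoin ℤ_[p] {θ})) - 1}
            ^ (i - 1)) ∧
    (Subgroup.lowerCentralSeries (⊤ : Subgroup (GpGrp (↥(Algebra.adjoin ℤ_[p] {θ})) u)) i).relIndex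
      (Subgroup.lowerCentralSeries (⊤ : Subgroup (GpGrp (↥(Algebra.adjoin ℤ_[p] {θ})) u)) (i - 1)) = p := by
  set O := Algebra.adjoin ℤ_[p] {θ}
  set θO : O := ⟨θ, Algebra.subset_adjoin rfl⟩
  have hθO : IsPrimitiveRoot θO p := IsPrimitiveRoot.coe_submonoidClass_iff.1 hθ
  have hgen : Algebra.adjoin ℤ_[p] {θO} = ⊤ := by
    convert Algebra.adjoin_adjoin_coe_preimage (R := ℤ_[p]) (s := {θ})
    ext x
    simp [θO, Subtype.ext_iff]
  have : Algebra.IsIntegral ℤ_[p] O := Algebra.IsIntegral.adjoin fun x hx =>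
    IsIntegral.of_pow (Fact.out : p.Prime).pos (hx ▸ hθ.pow_eq_one ▸ isIntegral_one)
  have : FaithfulSMul ℤ_[p] K := by
    rw [faithfulSMul_iff_algebraMap_injective, IsScalarTower.algebraMap_eq ℤ_[p] ℚ_[p] K]
    exact (algebraMap ℚ_[p] K).injective.comp (IsFractionRing.injective ℤ_[p] ℚ_[p])
  have : FaithfulSMul ℤ_[p] O := FaithfulSMul.tower_bot ℤ_[p] O K
  have hreg : IsLeftRegular (θO - 1) :=
    IsLeftCancelMulZero.mul_left_cancel_of_ne_zero
      (sub_ne_zero.2 (hθO.ne_one (Fact.out : p.Prime).one_lt))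
  obtain ⟨k, rfl⟩ : ∃ k, i = k + 2 := ⟨i - 2, by omega⟩
  rw [show k + 2 - 1 = k + 1 from rfl, lowerCentralSeries_succ_eq_transSub,
    lowerCentralSeries_succ_eq_transSub, hu, relIndex_transSub,
    Ideal.relIndex_span_singleton_pow_succ hreg, PadicInt.card_quotient_span_sub_one hθO hgen]
  exact ⟨rfl, rfl⟩

/-- Let `p` be an odd prime, `O = ℤ_p[θ]` with `θ` a primitive `p`-th root of unity over
`ℚ_p`, and `G = O ⋊ C_p` where the generator `τ` of `C_p` acts as multiplication by `θ`.
Then `γ_i(G) = (θ-1)^(i-1) O` for all `i ≥ 2` (note `γ_i(G)` is `lowerCentralSeries G (i-1)`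
in Mathlib's indexing), and `γ_i(G)/γ_{i+1}(G) ≅ C_p`, i.e. the relative index of
`γ_{i+1}(G)` in `γ_i(G)` equals `p`. -/
theorem lowerCentralSeries_maximal_class_group
    (p : ℕ) [Fact p.Prime] (hodd : Odd p) {K : Type} [Field K]
    [Algebra ℚ_[p] K] [Algebra ℤ_[p] K] [IsScalarTower ℤ_[p] ℚ_[p] K]
    (θ : K) (hθ : IsPrimitiveRoot θ p)
    (hK : Algebra.adjoin ℚ_[p] {θ} = ⊤)
    (u : (Algebra.adjoin ℤ_[p] {θ})ˣ)
    (hu : (u : ↥(Algebra.adjoin ℤ_[p] {θ})) = ⟨θ, Algebra.subset_adjoin rfl⟩)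
    (i : ℕ) (hi : 2 ≤ i) :
    Subgroup.lowerCentralSeries (⊤ : Subgroup (GpGrp (↥(Algebra.adjoin ℤ_[p] {θ})) u)) (i - 1)
      = transSub (↥(Algebra.adjoin ℤ_[p] {θ})) u
          (Ideal.span {(⟨θ, Algebra.subset_adjoin rfl⟩ : ↥(Algebra.adjoin ℤ_[p] {θ})) - 1}
            ^ (i - 1)) ∧
    (Subgroup.lowerCentralSeries (⊤ : Subgroup (GpGrp (↥(Algebra.adjoin ℤ_[p] {θ})) u)) i).relIndex
      (Subgroup.lowerCentralSeries (⊤ : Subgroup (GpGrp (↥(Algebra.adjoin ℤ_[p] {θ})) u)) (i - 1)) = p :=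
  lowerCentralSeries_maximal_class_group_general p θ hθ u hu i hi
end
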